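/- arXiv:1903.00290 — 4 statements merged into one kernel-verified Lean document; each statement's English description precedes it below -/
import Mathlib

section
/- Let A be an n×n symmetric positive definite matrix and let x : ℝ≥0 → ℝ^n be an arbitrary absolutely continuous function such that for every i and almost every t, ẋ_i(t)·(Ax(t))_i ≤ 0. Then x(t) converges to a constant vector x* as t → ∞. -/
open MeasureTheory Set Matrix Filter


/-- Product rule for primitives of interval-integrable functions (integrated form). -/
lemma primitive_mul_integral (f h : ℝ → ℝ)
    (hf : ∀ a b : ℝ, IntervalIntegrable f volume a b)
    (hh : ∀ a b : ℝ, IntervalIntegrable h volume a b)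
    {a b : ℝ} (hab : a ≤ b) :
    (∫ τ in a..b, f τ) * (∫ τ in a..b, h τ)
      = (∫ τ in a..b, f τ * ∫ σ in a..τ, h σ)
        + (∫ τ in a..b, h τ * ∫ σ in a..τ, f σ) := by
  set μ : Measure ℝ := volume.restrict (Ioc a b) with hμdef
  have hIf : Integrable f μ := (hf a b).1
  have hIh : Integrable h μ := (hh a b).1
  -- the kernel
  set Φ : ℝ → ℝ → ℝ := fun τ σ => if σ ≤ τ then f τ * h σ else 0 with hΦdef
  have hS : MeasurableSet {p : ℝ × ℝ | p.2 ≤ p.1} :=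
    measurableSet_le measurable_snd measurable_fst
  have hΦint : Integrable (Function.uncurry Φ) (μ.prod μ) := by
    have base : Integrable (fun p : ℝ × ℝ => f p.1 * h p.2) (μ.prod μ) :=
      hIf.mul_prod hIh
    have : Function.uncurry Φ
        = ({p : ℝ × ℝ | p.2 ≤ p.1}).indicator (fun p => f p.1 * h p.2) := by
      funext p
      by_cases hp : p.2 ≤ p.1 <;>
        simp [Function.uncurry, hΦdef, hp, Set.indicator_apply, Set.mem_setOf_eq]
    rw [this]
    exact base.indicator hS
  -- inner integral identities
  have inner1 : ∀ τ ∈ Ioc a b, (∫ σ, Φ τ σ ∂μ) = f τ * ∫ σ in a..τ, h σ := by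
    intro τ hτ
    have h1 : (fun σ => Φ τ σ) = fun σ => f τ * (Iic τ).indicator h σ := by
      funext σ
      by_cases hp : σ ≤ τ <;> simp [hΦdef, hp, Set.indicator_apply]
    rw [h1, integral_const_mul, integral_indicator measurableSet_Iic,
      Measure.restrict_restrict measurableSet_Iic]
    have : Iic τ ∩ Ioc a b = Ioc a τ := by
      ext σ; simp only [mem_inter_iff, mem_Iic, mem_Ioc]
      exact ⟨fun ⟨h1', h2', _⟩ => ⟨h2', h1'⟩, fun ⟨h1', h2'⟩ => ⟨h2', h1', h2'.trans hτ.2⟩⟩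
    rw [this, intervalIntegral.integral_of_le hτ.1.le]
  have inner2 : ∀ σ ∈ Ioc a b,
      (∫ τ, Φ τ σ ∂μ) = h σ * ((∫ x in a..b, f x) - ∫ x in a..σ, f x) := by
    intro σ hσ
    have h1 : (fun τ => Φ τ σ) = fun τ => ((Ici σ).indicator f τ) * h σ := by
      funext τ
      by_cases hp : σ ≤ τ <;> simp [hΦdef, hp, Set.indicator_apply]
    rw [h1, integral_mul_const, integral_indicator measurableSet_Ici,
      Measure.restrict_restrict measurableSet_Ici]
    have h2 : Ici σ ∩ Ioc a b = Icc σ b := by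
      ext τ; simp only [mem_inter_iff, mem_Ici, mem_Ioc, mem_Icc]
      exact ⟨fun ⟨h1', _, h3'⟩ => ⟨h1', h3'⟩, fun ⟨h1', h2'⟩ => ⟨h1', hσ.1.trans_le h1', h2'⟩⟩
    rw [h2, integral_Icc_eq_integral_Ioc, ← intervalIntegral.integral_of_le hσ.2,
      ← intervalIntegral.integral_interval_sub_left (hf a b) (hf a σ)]
    ring
  -- Fubini swap
  have swap : (∫ τ, (∫ σ, Φ τ σ ∂μ) ∂μ) = ∫ σ, (∫ τ, Φ τ σ ∂μ) ∂μ :=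
    integral_integral_swap hΦint
  -- integrability of the primitive products
  have iP : IntegrableOn (fun σ => h σ * ∫ x in a..σ, f x) (Ioc a b) volume := by
    have cP : ContinuousOn (fun t => ∫ x in a..t, f x) (Set.uIcc a b) :=
      (intervalIntegral.continuous_primitive hf a).continuousOn
    have := (hh a b).mul_continuousOn cP
    rwa [intervalIntegrable_iff, uIoc_of_le hab] at this
  -- put it together
  have lhs_eq : (∫ τ, (∫ σ, Φ τ σ ∂μ) ∂μ) = ∫ τ in Ioc a b, (f τ * ∫ σ in a..τ, h σ) :=
    setIntegral_congr_fun measurableSet_Ioc inner1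
  have rhs_eq : (∫ σ, (∫ τ, Φ τ σ ∂μ) ∂μ)
      = (∫ τ in Ioc a b, h τ) * (∫ τ in Ioc a b, f τ)
        - ∫ τ in Ioc a b, (h τ * ∫ σ in a..τ, f σ) := by
    have e1 : (∫ σ, (∫ τ, Φ τ σ ∂μ) ∂μ)
        = ∫ σ in Ioc a b, (h σ * ((∫ x in a..b, f x) - ∫ x in a..σ, f x)) :=
      setIntegral_congr_fun measurableSet_Ioc inner2
    have e2 : IntegrableOn (fun σ => h σ * (∫ x in a..b, f x)) (Ioc a b) volume :=
      hIh.mul_const _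
    have e3 : ∀ σ, h σ * ((∫ x in a..b, f x) - ∫ x in a..σ, f x)
        = h σ * (∫ x in a..b, f x) - h σ * (∫ x in a..σ, f x) := fun σ => by ring
    rw [e1]
    simp only [e3]
    rw [integral_sub e2 iP, integral_mul_const, intervalIntegral.integral_of_le hab]
  have key := lhs_eq.symm.trans (swap.trans rhs_eq)
  rw [intervalIntegral.integral_of_le hab, intervalIntegral.integral_of_le hab,
    intervalIntegral.integral_of_le hab, intervalIntegral.integral_of_le hab]
  linarith [key]

lemma primitive_mul_diff (f h F H : ℝ → ℝ)
    (hf : ∀ a b : ℝ, IntervalIntegrable f volume a b)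
    (hh : ∀ a b : ℝ, IntervalIntegrable h volume a b)
    (hF : ∀ u v : ℝ, F v = F u + ∫ τ in u..v, f τ)
    (hH : ∀ u v : ℝ, H v = H u + ∫ τ in u..v, h τ)
    {a b : ℝ} (hab : a ≤ b) :
    F b * H b - F a * H a = ∫ τ in a..b, (f τ * H τ + F τ * h τ) := by
  have cPf : ContinuousOn (fun τ => ∫ σ in a..τ, f σ) (Set.uIcc a b) :=
    (intervalIntegral.continuous_primitive hf a).continuousOn
  have cPh : ContinuousOn (fun τ => ∫ σ in a..τ, h σ) (Set.uIcc a b) :=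
    (intervalIntegral.continuous_primitive hh a).continuousOn
  have I1 : IntervalIntegrable (fun τ => f τ * ∫ σ in a..τ, h σ) volume a b :=
    (hf a b).mul_continuousOn cPh
  have I2 : IntervalIntegrable (fun τ => h τ * ∫ σ in a..τ, f σ) volume a b :=
    (hh a b).mul_continuousOn cPf
  have I3 : IntervalIntegrable (fun τ => f τ * H a) volume a b := (hf a b).mul_const _
  have I4 : IntervalIntegrable (fun τ => h τ * F a) volume a b := (hh a b).mul_const _
  have congr1 : (∫ τ in a..b, (f τ * H τ + F τ * h τ))
      = ∫ τ in a..b, ((f τ * H a + f τ * ∫ σ in a..τ, h σ)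
          + (h τ * F a + h τ * ∫ σ in a..τ, f σ)) := by
    apply intervalIntegral.integral_congr
    intro τ _
    dsimp only
    rw [hH a τ, hF a τ]; ring
  rw [congr1, intervalIntegral.integral_add (I3.add I1) (I4.add I2),
    intervalIntegral.integral_add I3 I1, intervalIntegral.integral_add I4 I2,
    intervalIntegral.integral_mul_const, intervalIntegral.integral_mul_const,
    hF a b, hH a b]
  linear_combination primitive_mul_integral f h hf hh hab


lemma crossUp (ψ : ℝ → ℝ) (hψ : Continuous ψ) {s t p q : ℝ} (hst : s ≤ t)
    (hs : ψ s ≤ p) (ht : q ≤ ψ t) (hpq : p < q) :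
    ∃ u v, s ≤ u ∧ u ≤ v ∧ v ≤ t ∧ ψ u = p ∧ ψ v = q ∧
      ∀ τ ∈ Icc u v, p ≤ ψ τ ∧ ψ τ ≤ q := by
  set S1 : Set ℝ := Icc s t ∩ ψ ⁻¹' (Iic p) with hS1def
  have hS1comp : IsCompact S1 :=
    isCompact_Icc.inter_right (isClosed_Iic.preimage hψ)
  have hS1ne : S1.Nonempty := ⟨s, ⟨le_refl s, hst⟩, hs⟩
  set u := sSup S1 with hudef
  have hu : u ∈ S1 := hS1comp.sSup_mem hS1ne
  have hu_icc : u ∈ Icc s t := hu.1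
  have hup : ψ u ≤ p := hu.2
  have hu_lt_t : u < t := by
    rcases lt_or_eq_of_le hu_icc.2 with h | h
    · exact h
    · exfalso; rw [h] at hup; linarith
  have after : ∀ τ, u < τ → τ ≤ t → p < ψ τ := by
    intro τ h1 h2
    by_contra hc
    push_neg at hc
    have : τ ∈ S1 := ⟨⟨le_trans hu_icc.1 h1.le, h2⟩, hc⟩
    have := le_csSup hS1comp.bddAbove this
    linarith
  have ψu_eq : ψ u = p := by
    refine le_antisymm hup ?_
    by_contra hc
    push_neg at hc
    have hev : ∀ᶠ τ in nhds u, ψ τ < p := by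
      have : Filter.Tendsto ψ (nhds u) (nhds (ψ u)) := hψ.continuousAt
      exact this.eventually_lt_const hc
    have hev' : ∀ᶠ τ in nhdsWithin u (Ioi u), ψ τ < p := hev.filter_mono nhdsWithin_le_nhds
    have hmem : Ioc u t ∈ nhdsWithin u (Ioi u) := Ioc_mem_nhdsGT hu_lt_t
    obtain ⟨τ, hτ1, hτ2⟩ := (hev'.and (eventually_of_mem hmem (fun x hx => hx))).exists
    exact absurd (after τ hτ2.1 hτ2.2) (by linarith)
  -- second stage
  set S2 : Set ℝ := Icc u t ∩ ψ ⁻¹' (Ici q) with hS2def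
  have hS2comp : IsCompact S2 :=
    isCompact_Icc.inter_right (isClosed_Ici.preimage hψ)
  have hS2ne : S2.Nonempty := ⟨t, ⟨hu_icc.2, le_refl t⟩, ht⟩
  set v := sInf S2 with hvdef
  have hv : v ∈ S2 := hS2comp.sInf_mem hS2ne
  have hv_icc : v ∈ Icc u t := hv.1
  have hvq : q ≤ ψ v := hv.2
  have hu_lt_v : u < v := by
    rcases lt_or_eq_of_le hv_icc.1 with h | h
    · exact h
    · exfalso; rw [← h] at hvq; rw [ψu_eq] at hvq; linarith
  have before : ∀ τ, u ≤ τ → τ < v → ψ τ < q := by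
    intro τ h1 h2
    by_contra hc
    push_neg at hc
    have : τ ∈ S2 := ⟨⟨h1, le_trans h2.le hv_icc.2⟩, hc⟩
    have := csInf_le hS2comp.bddBelow this
    linarith
  have ψv_eq : ψ v = q := by
    refine le_antisymm ?_ hvq
    by_contra hc
    push_neg at hc
    have hev : ∀ᶠ τ in nhds v, q < ψ τ := by
      have : Filter.Tendsto ψ (nhds v) (nhds (ψ v)) := hψ.continuousAt
      exact this.eventually_const_lt hc
    have hev' : ∀ᶠ τ in nhdsWithin v (Iio v), q < ψ τ := hev.filter_mono nhdsWithin_le_nhds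
    have hmem : Ico u v ∈ nhdsWithin v (Iio v) := Ico_mem_nhdsLT hu_lt_v
    obtain ⟨τ, hτ1, hτ2⟩ := (hev'.and (eventually_of_mem hmem (fun x hx => hx))).exists
    exact absurd (before τ hτ2.1 hτ2.2) (by linarith)
  refine ⟨u, v, hu_icc.1, hu_lt_v.le, hv_icc.2, ψu_eq, ψv_eq, ?_⟩
  intro τ hτ
  constructor
  · rcases eq_or_lt_of_le hτ.1 with h | h
    · rw [← h, ψu_eq]
    · exact (after τ h (le_trans hτ.2 hv_icc.2)).le
  · rcases eq_or_lt_of_le hτ.2 with h | h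
    · rw [h, ψv_eq]
    · exact (before τ hτ.1 h).le

lemma cross_extract (φ : ℝ → ℝ) (hφ : Continuous φ) {a b p q τ₀ τ₁ : ℝ}
    (hpq : p < q) (h0 : τ₀ ∈ Icc a b) (h1 : τ₁ ∈ Icc a b)
    (hv0 : |φ τ₀| ≤ p) (hv1 : q ≤ |φ τ₁|) :
    ∃ u v, u ∈ Icc a b ∧ v ∈ Icc a b ∧ u ≤ v ∧
      (∀ τ ∈ Icc u v, p ≤ |φ τ| ∧ |φ τ| ≤ q) ∧ q - p ≤ |φ v - φ u| := by
  have hψ : Continuous fun τ => |φ τ| := hφ.abs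
  rcases le_total τ₀ τ₁ with hc | hc
  · obtain ⟨u, v, h₁, h₂, h₃, h₄, h₅, h₆⟩ :=
      crossUp (fun τ => |φ τ|) hψ hc hv0 hv1 hpq
    refine ⟨u, v, ⟨le_trans h0.1 h₁, le_trans (h₂.trans h₃) h1.2⟩,
      ⟨le_trans h0.1 (h₁.trans h₂), le_trans h₃ h1.2⟩, h₂, h₆, ?_⟩
    calc q - p = |φ v| - |φ u| := by rw [h₄, h₅]
      _ ≤ |φ v - φ u| := abs_sub_abs_le_abs_sub _ _
  · obtain ⟨u', v', h₁, h₂, h₃, h₄, h₅, h₆⟩ :=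
      crossUp (fun τ => |φ (-τ)|) (hψ.comp continuous_neg) (neg_le_neg hc)
        (by simpa using hv0) (by simpa using hv1) hpq
    refine ⟨-v', -u', ⟨?_, ?_⟩, ⟨?_, ?_⟩, by linarith, ?_, ?_⟩
    · linarith [h1.1]
    · linarith [h0.2]
    · linarith [h1.1]
    · linarith [h0.2]
    · intro τ hτ
      have : -τ ∈ Icc u' v' := ⟨by linarith [hτ.2], by linarith [hτ.1]⟩
      simpa using h₆ (-τ) this
    · have e1 : |φ (-u')| = p := h₄
      have e2 : |φ (-v')| = q := h₅
      calc q - p = |φ (-v')| - |φ (-u')| := by rw [e1, e2]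
        _ ≤ |φ (-v') - φ (-u')| := abs_sub_abs_le_abs_sub _ _
        _ = |φ (-u') - φ (-v')| := abs_sub_comm _ _

structure CtxP (n : ℕ) where
  A : Matrix (Fin n) (Fin n) ℝ
  X : ℝ → Fin n → ℝ
  g : ℝ → Fin n → ℝ
  hn : 0 < n
  hAsymm : ∀ i j, A i j = A j i
  hgi : ∀ i, ∀ a b : ℝ, IntervalIntegrable (fun τ => g τ i) volume a b
  hrep : ∀ i, ∀ a b : ℝ, X b i = X a i + ∫ τ in a..b, g τ i
  hsign : ∀ᵐ τ ∂(volume : Measure ℝ), 0 ≤ τ → ∀ i, g τ i * (∑ j, A i j * X τ j) ≤ 0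
  lam : ℝ
  hlam0 : 0 < lam
  hlam1 : lam ≤ 1
  hlamQ : ∀ v : Fin n → ℝ, lam * ‖v‖ ^ 2 ≤ ∑ i, v i * ∑ j, A i j * v j
  M : ℝ
  hM1 : 1 ≤ M
  hMA : ∀ i, (∑ j, |A i j|) ≤ M

namespace CtxP
variable {n : ℕ} (C : CtxP n)

noncomputable def m (i : Fin n) (τ : ℝ) : ℝ := ∑ j, C.A i j * C.X τ j

noncomputable def V (τ : ℝ) : ℝ := ∑ i, C.X τ i * C.m i τ

lemma hXc (i : Fin n) : Continuous (fun τ => C.X τ i) := by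
  have h : Continuous (fun t => C.X 0 i + ∫ τ in (0:ℝ)..t, C.g τ i) :=
    continuous_const.add (intervalIntegral.continuous_primitive (C.hgi i) 0)
  exact h.congr fun t => (C.hrep i 0 t).symm

lemma hmc (i : Fin n) : Continuous (C.m i) := by
  unfold m
  exact continuous_finset_sum _ fun j _ => continuous_const.mul (C.hXc j)

lemma hXnorm_sq : ∀ τ, C.lam * ‖C.X τ‖ ^ 2 ≤ C.V τ := fun τ => C.hlamQ (C.X τ)

lemma V_nonneg (τ : ℝ) : 0 ≤ C.V τ :=
  le_trans (mul_nonneg C.hlam0.le (sq_nonneg _)) (C.hXnorm_sq τ)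

lemma gm_intable (i : Fin n) (a b : ℝ) :
    IntervalIntegrable (fun τ => C.g τ i * C.m i τ) volume a b :=
  (C.hgi i a b).mul_continuousOn (C.hmc i).continuousOn

lemma sum_gm_intable (a b : ℝ) :
    IntervalIntegrable (fun τ => ∑ i, C.g τ i * C.m i τ) volume a b := by
  have h1 := IntervalIntegrable.sum (μ := volume) (a := a) (b := b) Finset.univ
    (f := fun i (τ : ℝ) => C.g τ i * C.m i τ) (fun i _ => C.gm_intable i a b)
  have e : (fun τ => ∑ i, C.g τ i * C.m i τ)
      = ∑ i : Fin n, fun (τ : ℝ) => C.g τ i * C.m i τ := by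
    funext τ; simp
  rw [e]; exact h1

lemma m_diff (i : Fin n) (s t : ℝ) :
    C.m i t - C.m i s = ∑ j, C.A i j * (C.X t j - C.X s j) := by
  unfold m
  rw [← Finset.sum_sub_distrib]
  exact Finset.sum_congr rfl fun j _ => by ring

lemma V_eq {a b : ℝ} (hab : a ≤ b) :
    C.V b - C.V a = ∫ τ in a..b, (2 * ∑ i, C.g τ i * C.m i τ) := by
  have key : ∀ i j : Fin n,
      C.X b i * C.X b j - C.X a i * C.X a j
        = ∫ τ in a..b, (C.g τ i * C.X τ j + C.X τ i * C.g τ j) :=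
    fun i j => primitive_mul_diff _ _ _ _ (C.hgi i) (C.hgi j)
      (fun u v => C.hrep i u v) (fun u v => C.hrep j u v) hab
  have intij : ∀ i j : Fin n, IntervalIntegrable
      (fun τ => C.A i j * (C.g τ i * C.X τ j + C.X τ i * C.g τ j)) volume a b := by
    intro i j
    exact (((C.hgi i a b).mul_continuousOn (C.hXc j).continuousOn).add
      ((C.hgi j a b).continuousOn_mul (C.hXc i).continuousOn)).const_mul _
  have step1 : C.V b - C.V a
      = ∑ i, ∑ j, C.A i j * (C.X b i * C.X b j - C.X a i * C.X a j) := by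
    unfold V m
    rw [← Finset.sum_sub_distrib]
    apply Finset.sum_congr rfl; intro i _
    rw [Finset.mul_sum, Finset.mul_sum, ← Finset.sum_sub_distrib]
    apply Finset.sum_congr rfl; intro j _; ring
  have step2 : C.V b - C.V a
      = ∑ i, ∑ j, C.A i j * ∫ τ in a..b, (C.g τ i * C.X τ j + C.X τ i * C.g τ j) := by
    rw [step1]; exact Finset.sum_congr rfl fun i _ => Finset.sum_congr rfl fun j _ => by
      rw [key i j]
  have inner_int : ∀ i : Fin n, IntervalIntegrable
      (fun τ => ∑ j, C.A i j * (C.g τ i * C.X τ j + C.X τ i * C.g τ j)) volume a b := by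
    intro i
    have h1 := IntervalIntegrable.sum (μ := volume) (a := a) (b := b) Finset.univ
      (f := fun j (τ : ℝ) => C.A i j * (C.g τ i * C.X τ j + C.X τ i * C.g τ j))
      (fun j _ => intij i j)
    have e : (fun τ => ∑ j, C.A i j * (C.g τ i * C.X τ j + C.X τ i * C.g τ j))
        = ∑ j : Fin n, fun (τ : ℝ) => C.A i j * (C.g τ i * C.X τ j + C.X τ i * C.g τ j) := by
      funext τ; simp
    rw [e]; exact h1
  have swap1 : (∫ τ in a..b, ∑ i, ∑ j, C.A i j * (C.g τ i * C.X τ j + C.X τ i * C.g τ j))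
      = ∑ i, ∫ τ in a..b, (∑ j, C.A i j * (C.g τ i * C.X τ j + C.X τ i * C.g τ j)) :=
    intervalIntegral.integral_finset_sum (fun i _ => inner_int i)
  have swap2 : ∀ i : Fin n, (∫ τ in a..b, (∑ j, C.A i j * (C.g τ i * C.X τ j + C.X τ i * C.g τ j)))
      = ∑ j, C.A i j * ∫ τ in a..b, (C.g τ i * C.X τ j + C.X τ i * C.g τ j) := by
    intro i
    rw [intervalIntegral.integral_finset_sum (fun j _ => intij i j)]
    exact Finset.sum_congr rfl fun j _ => intervalIntegral.integral_const_mul _ _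
  have step3 : C.V b - C.V a
      = ∫ τ in a..b, ∑ i, ∑ j, C.A i j * (C.g τ i * C.X τ j + C.X τ i * C.g τ j) := by
    rw [step2]
    calc ∑ i, ∑ j, C.A i j * ∫ τ in a..b, (C.g τ i * C.X τ j + C.X τ i * C.g τ j)
        = ∑ i, ∫ τ in a..b, (∑ j, C.A i j * (C.g τ i * C.X τ j + C.X τ i * C.g τ j)) :=
          Finset.sum_congr rfl fun i _ => (swap2 i).symm
      _ = ∫ τ in a..b, ∑ i, ∑ j, C.A i j * (C.g τ i * C.X τ j + C.X τ i * C.g τ j) :=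
          swap1.symm
  rw [step3]
  apply intervalIntegral.integral_congr
  intro τ _
  dsimp only
  have e1 : ∑ i, ∑ j, C.A i j * (C.g τ i * C.X τ j + C.X τ i * C.g τ j)
      = (∑ i, ∑ j, C.A i j * C.g τ i * C.X τ j)
        + ∑ i, ∑ j, C.A i j * C.X τ i * C.g τ j := by
    rw [← Finset.sum_add_distrib]
    apply Finset.sum_congr rfl; intro i _
    rw [← Finset.sum_add_distrib]
    exact Finset.sum_congr rfl fun j _ => by ring
  have e2 : (∑ i, ∑ j, C.A i j * C.g τ i * C.X τ j) = ∑ i, C.g τ i * C.m i τ := by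
    apply Finset.sum_congr rfl; intro i _
    rw [m, Finset.mul_sum]
    exact Finset.sum_congr rfl fun j _ => by ring
  have e3 : (∑ i, ∑ j, C.A i j * C.X τ i * C.g τ j) = ∑ j, C.g τ j * C.m j τ := by
    rw [Finset.sum_comm]
    apply Finset.sum_congr rfl; intro j _
    rw [m, Finset.mul_sum]
    apply Finset.sum_congr rfl; intro i _
    rw [C.hAsymm j i]; ring
  rw [e1, e2, e3]; ring

lemma hsign_restrict {a b : ℝ} (h0 : 0 ≤ a) :
    ∀ᵐ τ ∂(volume.restrict (Icc a b)), ∀ i, C.g τ i * C.m i τ ≤ 0 := by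
  have h1 : ∀ᵐ τ ∂(volume.restrict (Icc a b)), 0 ≤ τ → ∀ i, C.g τ i * (∑ j, C.A i j * C.X τ j) ≤ 0 :=
    ae_restrict_of_ae C.hsign
  have h2 : ∀ᵐ τ ∂(volume.restrict (Icc a b)), τ ∈ Icc a b :=
    ae_restrict_mem measurableSet_Icc
  filter_upwards [h1, h2] with τ hτ1 hτ2
  exact hτ1 (le_trans h0 hτ2.1)

lemma V_antitone {a b : ℝ} (h0 : 0 ≤ a) (hab : a ≤ b) : C.V b ≤ C.V a := by
  have hid := C.V_eq hab
  have hint : IntervalIntegrable (fun τ => 2 * ∑ i, C.g τ i * C.m i τ) volume a b :=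
    (C.sum_gm_intable a b).const_mul 2
  have hz : IntervalIntegrable (fun _ : ℝ => (0:ℝ)) volume a b := intervalIntegrable_const
  have hle : (∫ τ in a..b, (2 * ∑ i, C.g τ i * C.m i τ)) ≤ ∫ τ in a..b, (0:ℝ) := by
    apply intervalIntegral.integral_mono_ae_restrict hab hint hz
    filter_upwards [C.hsign_restrict h0] with τ hτ
    have h3 : ∑ i, C.g τ i * C.m i τ ≤ 0 := Finset.sum_nonpos fun i _ => hτ i
    show 2 * ∑ i, C.g τ i * C.m i τ ≤ 0
    linarith
  simp only [intervalIntegral.integral_zero] at hle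
  linarith

lemma cost_bound (i : Fin n) {a b : ℝ} (h0 : 0 ≤ a) (hab : a ≤ b) :
    (∫ τ in a..b, |C.g τ i * C.m i τ|) ≤ (C.V a - C.V b) / 2 := by
  have hid := C.V_eq hab
  have hint1 : IntervalIntegrable (fun τ => |C.g τ i * C.m i τ|) volume a b :=
    (C.gm_intable i a b).abs
  have hint2 : IntervalIntegrable (fun τ => -∑ j, C.g τ j * C.m j τ) volume a b :=
    (C.sum_gm_intable a b).neg
  have mono : (∫ τ in a..b, |C.g τ i * C.m i τ|)
      ≤ ∫ τ in a..b, (-∑ j, C.g τ j * C.m j τ) := by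
    apply intervalIntegral.integral_mono_ae_restrict hab hint1 hint2
    filter_upwards [C.hsign_restrict h0] with τ hτ
    show |C.g τ i * C.m i τ| ≤ -∑ j, C.g τ j * C.m j τ
    have h3 : ∑ j ∈ Finset.univ.erase i, C.g τ j * C.m j τ ≤ 0 :=
      Finset.sum_nonpos fun j _ => hτ j
    have h4 : ∑ j ∈ Finset.univ.erase i, (C.g τ j * C.m j τ) + C.g τ i * C.m i τ
        = ∑ j, C.g τ j * C.m j τ := Finset.sum_erase_add _ _ (Finset.mem_univ i)
    rw [abs_of_nonpos (hτ i)]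
    linarith
  have e2 : (∫ τ in a..b, (-∑ j, C.g τ j * C.m j τ)) = (C.V a - C.V b)/2 := by
    rw [intervalIntegral.integral_neg]
    have e3 : (∫ τ in a..b, (2 * ∑ i, C.g τ i * C.m i τ))
        = 2 * ∫ τ in a..b, (∑ i, C.g τ i * C.m i τ) :=
      intervalIntegral.integral_const_mul _ _
    rw [e3] at hid
    linarith
  linarith [mono, e2.ge]

lemma var_bound (i : Fin n) {lam' a b a' b' : ℝ} (hl : 0 < lam') (h0 : 0 ≤ a)
    (hm : ∀ τ ∈ Icc a b, lam' ≤ |C.m i τ|)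
    (ha' : a ≤ a') (hab' : a' ≤ b') (hb' : b' ≤ b) :
    |C.X b' i - C.X a' i| ≤ (C.V a - C.V b) / (2 * lam') := by
  have h0' : 0 ≤ a' := le_trans h0 ha'
  have hrepr : C.X b' i - C.X a' i = ∫ τ in a'..b', C.g τ i := by
    rw [C.hrep i a' b']; ring
  have step1 : |C.X b' i - C.X a' i| ≤ ∫ τ in a'..b', |C.g τ i| := by
    rw [hrepr]
    exact intervalIntegral.abs_integral_le_integral_abs hab'
  have step2 : (∫ τ in a'..b', |C.g τ i|)
      ≤ ∫ τ in a'..b', |C.g τ i * C.m i τ| / lam' := by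
    apply intervalIntegral.integral_mono_on hab' (C.hgi i a' b').abs
      (((C.gm_intable i a' b').abs).div_const lam')
    intro τ hτ
    have hmτ : lam' ≤ |C.m i τ| := hm τ ⟨le_trans ha' hτ.1, le_trans hτ.2 hb'⟩
    rw [abs_mul, le_div_iff₀ hl]
    exact mul_le_mul_of_nonneg_left hmτ (abs_nonneg _)
  have step3 : (∫ τ in a'..b', |C.g τ i * C.m i τ| / lam')
      = (∫ τ in a'..b', |C.g τ i * C.m i τ|) / lam' := by
    simp [div_eq_mul_inv, intervalIntegral.integral_mul_const]
  have step4 : (∫ τ in a'..b', |C.g τ i * C.m i τ|) ≤ (C.V a' - C.V b') / 2 :=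
    C.cost_bound i h0' hab'
  have step5 : (C.V a' - C.V b') ≤ C.V a - C.V b := by
    have g1 : C.V a' ≤ C.V a := C.V_antitone h0 ha'
    have g2 : C.V b ≤ C.V b' := C.V_antitone (le_trans h0' hab') hb'
    linarith
  rw [step3] at step2
  have step6 : (C.V a' - C.V b') / 2 / lam' ≤ (C.V a - C.V b) / (2 * lam') := by
    rw [div_div]
    gcongr
  calc |C.X b' i - C.X a' i| ≤ (∫ τ in a'..b', |C.g τ i * C.m i τ|) / lam' :=
        le_trans step1 step2
    _ ≤ (C.V a' - C.V b') / 2 / lam' := by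
        gcongr
    _ ≤ (C.V a - C.V b) / (2 * lam') := step6


noncomputable def β : ℝ := C.lam / (16 * n * C.M)
noncomputable def c₀ : ℝ := C.lam * C.β ^ 2 / (8 * n * C.M ^ 2)
noncomputable def ρ (u : ℕ) (η : ℝ) : ℝ := C.c₀ * C.β ^ (2 * u) * η ^ 2

lemma hnR (C' : CtxP n) : (0:ℝ) < (n:ℝ) := by exact_mod_cast C'.hn
lemma hnR1 (C' : CtxP n) : (1:ℝ) ≤ (n:ℝ) := by exact_mod_cast C'.hn
lemma hM0 : (0:ℝ) < C.M := lt_of_lt_of_le one_pos C.hM1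
lemma βpos : 0 < C.β :=
  div_pos C.hlam0 (mul_pos (mul_pos (by norm_num) C.hnR) C.hM0)

lemma βlt1 : C.β < 1 := by
  rw [β, div_lt_one (mul_pos (mul_pos (by norm_num) C.hnR) C.hM0)]
  nlinarith [C.hlam1, C.hM1, C.hnR1]
lemma βle1 : C.β ≤ 1 := C.βlt1.le
lemma c₀pos : 0 < C.c₀ :=
  div_pos (mul_pos C.hlam0 (pow_pos C.βpos 2))
    (mul_pos (mul_pos (by norm_num) C.hnR) (pow_pos C.hM0 2))
lemma ρpos (u : ℕ) {η : ℝ} (hη : 0 < η) : 0 < C.ρ u η :=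
  mul_pos (mul_pos C.c₀pos (pow_pos C.βpos _)) (pow_pos hη 2)
lemma βpow_le1 (k : ℕ) : C.β ^ k ≤ 1 :=
  pow_le_one₀ C.βpos.le C.βle1
lemma ρ_le (u : ℕ) {η : ℝ} (hη : 0 < η) : C.ρ u η ≤ C.c₀ * η ^ 2 := by
  unfold ρ
  rw [show C.c₀ * C.β ^ (2*u) * η^2 = (C.c₀ * η^2) * C.β^(2*u) by ring]
  have h1 : (0:ℝ) ≤ C.c₀ * η ^ 2 := by have := C.c₀pos; positivity
  calc (C.c₀ * η^2) * C.β^(2*u) ≤ (C.c₀ * η^2) * 1 :=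
        mul_le_mul_of_nonneg_left (C.βpow_le1 _) h1
    _ = C.c₀ * η^2 := by ring
lemma ρ_step {η : ℝ} {u : ℕ} (hu : 1 ≤ u) : C.ρ (u - 1) (C.β * η) = C.ρ u η := by
  unfold ρ
  calc C.c₀ * C.β ^ (2 * (u - 1)) * (C.β * η) ^ 2
      = C.c₀ * (C.β ^ (2 * (u - 1)) * C.β ^ 2) * η ^ 2 := by ring
    _ = C.c₀ * C.β ^ (2 * (u - 1) + 2) * η ^ 2 := by rw [pow_add]
    _ = C.c₀ * C.β ^ (2 * u) * η ^ 2 := by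
        rw [show 2 * (u - 1) + 2 = 2 * u from by omega]

lemma crossing (u : ℕ) : ∀ (η a b : ℝ) (i : Fin n), 0 < η → 0 ≤ a → a ≤ b →
    (∀ τ ∈ Icc a b, η ≤ |C.m i τ| ∧ |C.m i τ| ≤ 2 * η) →
    η / 2 ≤ |C.m i b - C.m i a| →
    {j | ∃ τ ∈ Icc a b, |C.m j τ| < η}.ncard ≤ u →
    2 * C.ρ u η ≤ C.V a - C.V b := by
  induction u using Nat.strong_induction_on with
  | _ u IH =>
  intro η a b i hη h0 hab hwin hjump hcard
  by_contra hcon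
  push_neg at hcon
  set D := C.V a - C.V b with hDdef
  have hD0 : 0 ≤ D := sub_nonneg.mpr (C.V_antitone h0 hab)
  have hβη : 0 < C.β * η := mul_pos C.βpos hη
  have hβηlt : C.β * η < η := by nlinarith [C.βlt1, hη]
  by_cases hA : ∃ j, (¬ ∀ τ ∈ Icc a b, C.β * η < |C.m j τ|)
      ∧ (∃ τ₁ ∈ Icc a b, 2 * (C.β * η) ≤ |C.m j τ₁|)
  · -- Case A : extract a sub-crossing at scale β*η and use the IH
    obtain ⟨j, hjlow, τ₁, hτ₁, hτ₁v⟩ := hA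
    push_neg at hjlow
    obtain ⟨τ₀, hτ₀, hτ₀v⟩ := hjlow
    obtain ⟨u', v', hu', hv', huv', hwin', hjump'⟩ :=
      cross_extract (C.m j) (C.hmc j) (by linarith : C.β * η < 2 * (C.β * η))
        hτ₀ hτ₁ hτ₀v hτ₁v
    have hIccsub : Icc u' v' ⊆ Icc a b := Icc_subset_Icc hu'.1 hv'.2
    set P := {k | ∃ τ ∈ Icc a b, |C.m k τ| < η} with hPdef
    have hjP : j ∈ P := ⟨τ₀, hτ₀, lt_of_le_of_lt hτ₀v hβηlt⟩
    have hPfin : P.Finite := Set.toFinite P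
    have hPpos : 0 < P.ncard := (Set.ncard_pos hPfin).mpr ⟨j, hjP⟩
    have hu1 : 1 ≤ u := le_trans hPpos hcard
    have hsub : {k | ∃ τ ∈ Icc u' v', |C.m k τ| < C.β * η} ⊆ P \ {j} := by
      intro k hk
      obtain ⟨τ, hτ, hkv⟩ := hk
      constructor
      · exact ⟨τ, hIccsub hτ, lt_trans hkv hβηlt⟩
      · intro hkj
        rw [Set.mem_singleton_iff] at hkj
        subst hkj
        exact absurd hkv (not_lt.mpr (hwin' τ hτ).1)
    have hcard' : {k | ∃ τ ∈ Icc u' v', |C.m k τ| < C.β * η}.ncard ≤ u - 1 := by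
      have h1 := Set.ncard_le_ncard hsub hPfin.diff
      have h2 : (P \ {j}).ncard = P.ncard - 1 :=
        Set.ncard_diff_singleton_of_mem hjP
      omega
    have h0u' : 0 ≤ u' := le_trans h0 hu'.1
    have hIH := IH (u - 1) (by omega) (C.β * η) u' v' j hβη h0u' huv'
      (fun τ hτ => (hwin' τ hτ))
      (by linarith [hjump'] : (C.β * η) / 2 ≤ |C.m j v' - C.m j u'|)
      hcard'
    have hnest : C.V u' - C.V v' ≤ D := by
      have g1 : C.V u' ≤ C.V a := C.V_antitone h0 hu'.1
      have g2 : C.V b ≤ C.V v' := C.V_antitone (le_trans h0u' huv') hv'.2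
      rw [hDdef]; linarith
    rw [C.ρ_step hu1] at hIH
    linarith
  · -- Case B : all coordinates are high or small ; endpoint algebra
    push_neg at hA
    set Δ : Fin n → ℝ := fun k => C.X b k - C.X a k with hΔdef
    set W : ℝ := ‖Δ‖ with hWdef
    have hW0 : 0 ≤ W := norm_nonneg _
    have hWk : ∀ k, |Δ k| ≤ W := by
      intro k
      have h := norm_le_pi_norm Δ k
      rwa [Real.norm_eq_abs] at h
    have hdm : ∀ k, C.m k b - C.m k a = ∑ l, C.A k l * Δ l := fun k => C.m_diff k a b
    have hdmW : ∀ k, |C.m k b - C.m k a| ≤ C.M * W := by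
      intro k
      rw [hdm k]
      calc |∑ l, C.A k l * Δ l| ≤ ∑ l, |C.A k l * Δ l| :=
            Finset.abs_sum_le_sum_abs _ _
        _ ≤ ∑ l, |C.A k l| * W := by
            apply Finset.sum_le_sum
            intro l _
            rw [abs_mul]
            exact mul_le_mul_of_nonneg_left (hWk l) (abs_nonneg _)
        _ = (∑ l, |C.A k l|) * W := by rw [Finset.sum_mul]
        _ ≤ C.M * W := mul_le_mul_of_nonneg_right (C.hMA k) hW0
    set e : ℝ := D / (2 * (C.β * η)) with hedef
    have he0 : 0 ≤ e := div_nonneg hD0 (by nlinarith [hβη])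
    have h4βη : (0:ℝ) ≤ 4 * (C.β * η) * W :=
      mul_nonneg (mul_nonneg (by norm_num) hβη.le) hW0
    have hterm : ∀ k, Δ k * (C.m k b - C.m k a)
        ≤ e * (C.M * W) + 4 * (C.β * η) * W := by
      intro k
      by_cases hk : ∀ τ ∈ Icc a b, C.β * η < |C.m k τ|
      · have hvar : |Δ k| ≤ e :=
          C.var_bound k hβη h0 (fun τ hτ => (hk τ hτ).le) (le_refl a) hab (le_refl b)
        calc Δ k * (C.m k b - C.m k a) ≤ |Δ k * (C.m k b - C.m k a)| := le_abs_self _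
          _ = |Δ k| * |C.m k b - C.m k a| := abs_mul _ _
          _ ≤ e * (C.M * W) := mul_le_mul hvar (hdmW k) (abs_nonneg _) he0
          _ ≤ e * (C.M * W) + 4 * (C.β * η) * W := le_add_of_nonneg_right h4βη
      · push_neg at hk
        have hsmall := hA k hk
        have hma : |C.m k a| < 2 * (C.β * η) := hsmall a ⟨le_refl a, hab⟩
        have hmb : |C.m k b| < 2 * (C.β * η) := hsmall b ⟨hab, le_refl b⟩
        have hdmk : |C.m k b - C.m k a| ≤ 4 * (C.β * η) := by
          have h1 : |C.m k b - C.m k a| ≤ |C.m k b| + |C.m k a| := abs_sub _ _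
          linarith
        have heMW : (0:ℝ) ≤ e * (C.M * W) :=
          mul_nonneg he0 (mul_nonneg C.hM0.le hW0)
        calc Δ k * (C.m k b - C.m k a) ≤ |Δ k * (C.m k b - C.m k a)| := le_abs_self _
          _ = |Δ k| * |C.m k b - C.m k a| := abs_mul _ _
          _ ≤ W * (4 * (C.β * η)) := mul_le_mul (hWk k) hdmk (abs_nonneg _) hW0
          _ = 4 * (C.β * η) * W := by ring
          _ ≤ e * (C.M * W) + 4 * (C.β * η) * W := le_add_of_nonneg_left heMW
    have hquad : C.lam * W ^ 2 ≤ ∑ k, Δ k * (C.m k b - C.m k a) := by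
      have h := C.hlamQ Δ
      calc C.lam * W ^ 2 ≤ ∑ k, Δ k * ∑ l, C.A k l * Δ l := h
        _ = ∑ k, Δ k * (C.m k b - C.m k a) :=
            Finset.sum_congr rfl fun k _ => by rw [hdm k]
    have hsum : (∑ k, Δ k * (C.m k b - C.m k a))
        ≤ n * (e * (C.M * W) + 4 * (C.β * η) * W) := by
      calc (∑ k, Δ k * (C.m k b - C.m k a))
          ≤ ∑ _k : Fin n, (e * (C.M * W) + 4 * (C.β * η) * W) :=
            Finset.sum_le_sum fun k _ => hterm k
        _ = n * (e * (C.M * W) + 4 * (C.β * η) * W) := by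
            rw [Finset.sum_const, Finset.card_univ, Fintype.card_fin, nsmul_eq_mul]
    have hjump2 : η / 2 ≤ C.M * W := le_trans hjump (hdmW i)
    have hMW : 0 < C.M * W := lt_of_lt_of_le (by linarith) hjump2
    have hWpos : 0 < W := by
      by_contra hc
      push_neg at hc
      nlinarith [hMW, C.hM0]
    have hlamW : C.lam * W ≤ n * (e * C.M + 4 * (C.β * η)) := by
      have h1 : C.lam * W * W ≤ n * (e * C.M + 4 * (C.β * η)) * W := by
        calc C.lam * W * W = C.lam * W ^ 2 := by ring
          _ ≤ ∑ k, Δ k * (C.m k b - C.m k a) := hquad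
          _ ≤ ↑n * (e * (C.M * W) + 4 * (C.β * η) * W) := hsum
          _ = ↑n * (e * C.M + 4 * (C.β * η)) * W := by ring
      exact le_of_mul_le_mul_right h1 hWpos
    have hkey : n * C.M ^ 2 * D < C.lam * C.β ^ 2 * η ^ 2 / 4 := by
      have h2 : C.ρ u η ≤ C.c₀ * η ^ 2 := C.ρ_le u hη
      have h3 : C.c₀ = C.lam * C.β ^ 2 / (8 * n * C.M ^ 2) := rfl
      have hnM : (0:ℝ) < n * C.M ^ 2 := mul_pos C.hnR (pow_pos C.hM0 2)
      have hnne : (n:ℝ) ≠ 0 := C.hnR.ne'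
      have hMne : C.M ≠ 0 := C.hM0.ne'
      have h4 : D < 2 * (C.lam * C.β ^ 2 / (8 * n * C.M ^ 2) * η ^ 2) := by
        rw [← h3]; linarith
      calc n * C.M ^ 2 * D < n * C.M ^ 2 *
            (2 * (C.lam * C.β ^ 2 / (8 * n * C.M ^ 2) * η ^ 2)) :=
            (mul_lt_mul_iff_right₀ hnM).mpr h4
        _ = C.lam * C.β ^ 2 * η ^ 2 / 4 := by
            field_simp
            ring
    have hekey : n * C.M ^ 2 * e < C.lam * C.β * η / 8 := by
      rw [hedef, ← mul_div_assoc, div_lt_iff₀ (by nlinarith [hβη] : (0:ℝ) < 2 * (C.β * η))]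
      have heq : C.lam * C.β ^ 2 * η ^ 2 / 4 = C.lam * C.β * η / 8 * (2 * (C.β * η)) := by
        ring
      linarith [hkey]
    have hβ4 : 4 * (n:ℝ) * C.M * C.β = C.lam / 4 := by
      rw [β]
      have h1 := C.hnR.ne'
      have h2 := C.hM0.ne'
      field_simp
      ring
    have hmain : C.lam * (η / 2) ≤ n * C.M ^ 2 * e + 4 * n * C.M * C.β * η := by
      have h1 : C.lam * (η / 2) ≤ C.lam * (C.M * W) :=
        mul_le_mul_of_nonneg_left hjump2 C.hlam0.le
      have h3 : C.M * (C.lam * W) ≤ C.M * (n * (e * C.M + 4 * (C.β * η))) :=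
        mul_le_mul_of_nonneg_left hlamW C.hM0.le
      have h2' : C.lam * (C.M * W) = C.M * (C.lam * W) := by ring
      have h4' : C.M * (↑n * (e * C.M + 4 * (C.β * η)))
          = ↑n * C.M ^ 2 * e + 4 * ↑n * C.M * C.β * η := by ring
      linarith
    rw [hβ4] at hmain
    have hβη8 : C.lam * C.β * η / 8 ≤ C.lam * η / 8 := by
      have hp : 0 ≤ (1 - C.β) * (C.lam * η) :=
        mul_nonneg (by linarith [C.βle1]) (mul_pos C.hlam0 hη).le
      have hexp : (1 - C.β) * (C.lam * η) = C.lam * η - C.lam * C.β * η := by ring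
      linarith
    have hlη : 0 < C.lam * η := mul_pos C.hlam0 hη
    linarith

lemma card_le_n (C' : CtxP n) (s : Set (Fin n)) : s.ncard ≤ n := by
  have h := Set.ncard_le_ncard (Set.subset_univ s) Set.finite_univ
  simpa [Set.ncard_univ] using h

lemma no_cross_eventually {ε : ℝ} (hε : 0 < ε) :
    ∃ T, 0 ≤ T ∧ ∀ i : Fin n, ∀ a b, T ≤ a → a ≤ b →
      (∀ τ ∈ Icc a b, ε ≤ |C.m i τ| ∧ |C.m i τ| ≤ 2 * ε) →
      |C.m i b - C.m i a| < ε / 2 := by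
  by_contra hc
  push_neg at hc
  have hρ : 0 < 2 * C.ρ n ε := by linarith [C.ρpos n hε]
  have grow : ∀ N : ℕ, ∃ b', 0 ≤ b' ∧ (N : ℝ) * (2 * C.ρ n ε) ≤ C.V 0 - C.V b' := by
    intro N
    induction N with
    | zero => exact ⟨0, le_refl 0, by simp⟩
    | succ N ih =>
      obtain ⟨b', hb0, hbN⟩ := ih
      obtain ⟨i, a, b, hTa, hab, hwin, hjump⟩ := hc b' hb0
      have h0a : 0 ≤ a := le_trans hb0 hTa
      have hcross := C.crossing n ε a b i hε h0a hab hwin hjump (C.card_le_n _)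
      refine ⟨b, le_trans h0a hab, ?_⟩
      have g1 : C.V a ≤ C.V b' := C.V_antitone hb0 hTa
      push_cast
      linarith
  obtain ⟨N, hN⟩ := exists_nat_gt (C.V 0 / (2 * C.ρ n ε))
  obtain ⟨b', hb0, hbN⟩ := grow N
  have h1 : C.V 0 < (N:ℝ) * (2 * C.ρ n ε) := by
    rw [div_lt_iff₀ hρ] at hN
    linarith
  linarith [C.V_nonneg b']

lemma dichotomy {ε : ℝ} (hε : 0 < ε) :
    ∃ T, 0 ≤ T ∧ ∀ i : Fin n,
      (∀ t, T ≤ t → |C.m i t| < 2 * ε) ∨ (∀ t, T ≤ t → ε < |C.m i t|) := by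
  obtain ⟨T, hT0, hT⟩ := C.no_cross_eventually hε
  refine ⟨T, hT0, fun i => ?_⟩
  by_contra hcon
  push_neg at hcon
  obtain ⟨⟨t₁, ht₁, ht₁v⟩, t₂, ht₂, ht₂v⟩ := hcon
  have hmin : T ≤ min t₂ t₁ := le_min ht₂ ht₁
  obtain ⟨u, v, hu, hv, huv, hwin, hjump⟩ :=
    cross_extract (C.m i) (C.hmc i) (show ε < 2 * ε by linarith)
      (show t₂ ∈ Icc (min t₂ t₁) (max t₂ t₁) from ⟨min_le_left _ _, le_max_left _ _⟩)
      (show t₁ ∈ Icc (min t₂ t₁) (max t₂ t₁) from ⟨min_le_right _ _, le_max_right _ _⟩)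
      ht₂v ht₁v
  have := hT i u v (le_trans hmin hu.1) huv hwin
  linarith

noncomputable def Vlim : ℝ := sInf (C.V '' Ici 0)

lemma Vlim_le {t : ℝ} (ht : 0 ≤ t) : C.Vlim ≤ C.V t := by
  apply csInf_le
  · exact ⟨0, fun y ⟨s, _, hsy⟩ => hsy ▸ C.V_nonneg s⟩
  · exact ⟨t, ht, rfl⟩

lemma V_near_lim {δ : ℝ} (hδ : 0 < δ) :
    ∃ T, 0 ≤ T ∧ ∀ t, T ≤ t → C.V t - C.Vlim < δ := by
  have hne : (C.V '' Ici 0).Nonempty := ⟨C.V 0, 0, mem_Ici.mpr (le_refl 0), rfl⟩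
  have hlt : sInf (C.V '' Ici 0) < C.Vlim + δ := by
    rw [← Vlim]; linarith
  obtain ⟨y, ⟨T, hT0, rfl⟩, hy⟩ := exists_lt_of_csInf_lt hne hlt
  refine ⟨T, hT0, fun t ht => ?_⟩
  have := C.V_antitone hT0 ht
  linarith

lemma cauchy_est {δ : ℝ} (hδ : 0 < δ) :
    ∃ T, 0 ≤ T ∧ ∀ s t, T ≤ s → s ≤ t → ∀ j, |C.X t j - C.X s j| ≤ δ := by
  have hn1 := C.hnR
  have hM0 := C.hM0
  set ε := C.lam * δ / (8 * n) with hεdef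
  have hε : 0 < ε := div_pos (mul_pos C.hlam0 hδ) (by positivity)
  obtain ⟨T₀, hT₀0, hdich⟩ := C.dichotomy hε
  set δ' := ε * (C.lam * δ) / (n * C.M) with hδ'def
  have hδ' : 0 < δ' := div_pos (mul_pos hε (mul_pos C.hlam0 hδ)) (by positivity)
  obtain ⟨T₁, hT₁0, hnear⟩ := C.V_near_lim hδ'
  refine ⟨max T₀ T₁, le_trans hT₀0 (le_max_left _ _), ?_⟩
  intro s t hs hst j
  have hsT₀ : T₀ ≤ s := le_trans (le_max_left _ _) hs
  have hsT₁ : T₁ ≤ s := le_trans (le_max_right _ _) hs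
  have hs0 : 0 ≤ s := le_trans hT₀0 hsT₀
  set Δ : Fin n → ℝ := fun k => C.X t k - C.X s k with hΔdef
  set W : ℝ := ‖Δ‖ with hWdef
  have hW0 : 0 ≤ W := norm_nonneg _
  have hWk : ∀ k, |Δ k| ≤ W := by
    intro k
    have h := norm_le_pi_norm Δ k
    rwa [Real.norm_eq_abs] at h
  have hdm : ∀ k, C.m k t - C.m k s = ∑ l, C.A k l * Δ l := fun k => C.m_diff k s t
  have hdmW : ∀ k, |C.m k t - C.m k s| ≤ C.M * W := by
    intro k
    rw [hdm k]
    calc |∑ l, C.A k l * Δ l| ≤ ∑ l, |C.A k l * Δ l| := Finset.abs_sum_le_sum_abs _ _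
      _ ≤ ∑ l, |C.A k l| * W := by
          apply Finset.sum_le_sum
          intro l _
          rw [abs_mul]
          exact mul_le_mul_of_nonneg_left (hWk l) (abs_nonneg _)
      _ = (∑ l, |C.A k l|) * W := by rw [Finset.sum_mul]
      _ ≤ C.M * W := mul_le_mul_of_nonneg_right (C.hMA k) hW0
  set e : ℝ := (C.V s - C.V t) / (2 * ε) with hedef
  have hVst : 0 ≤ C.V s - C.V t := sub_nonneg.mpr (C.V_antitone hs0 hst)
  have he0 : 0 ≤ e := div_nonneg hVst (by positivity)
  have hterm : ∀ k, Δ k * (C.m k t - C.m k s) ≤ e * (C.M * W) + 4 * ε * W := by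
    intro k
    rcases hdich k with hsm | hhi
    · have hma : |C.m k s| < 2 * ε := hsm s hsT₀
      have hmb : |C.m k t| < 2 * ε := hsm t (le_trans hsT₀ hst)
      have hdmk : |C.m k t - C.m k s| ≤ 4 * ε := by
        have h1 : |C.m k t - C.m k s| ≤ |C.m k t| + |C.m k s| := abs_sub _ _
        linarith
      have heMW : (0:ℝ) ≤ e * (C.M * W) := mul_nonneg he0 (mul_nonneg hM0.le hW0)
      calc Δ k * (C.m k t - C.m k s) ≤ |Δ k * (C.m k t - C.m k s)| := le_abs_self _
        _ = |Δ k| * |C.m k t - C.m k s| := abs_mul _ _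
        _ ≤ W * (4 * ε) := mul_le_mul (hWk k) hdmk (abs_nonneg _) hW0
        _ = 4 * ε * W := by ring
        _ ≤ e * (C.M * W) + 4 * ε * W := le_add_of_nonneg_left heMW
    · have hvar : |Δ k| ≤ e := by
        apply C.var_bound k hε hs0
          (fun τ hτ => (hhi τ (le_trans hsT₀ hτ.1)).le)
          (le_refl s) hst (le_refl t)
      calc Δ k * (C.m k t - C.m k s) ≤ |Δ k * (C.m k t - C.m k s)| := le_abs_self _
        _ = |Δ k| * |C.m k t - C.m k s| := abs_mul _ _
        _ ≤ e * (C.M * W) := mul_le_mul hvar (hdmW k) (abs_nonneg _) he0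
        _ ≤ e * (C.M * W) + 4 * ε * W :=
            le_add_of_nonneg_right (by positivity)
  have hquad : C.lam * W ^ 2 ≤ ∑ k, Δ k * (C.m k t - C.m k s) := by
    have h := C.hlamQ Δ
    calc C.lam * W ^ 2 ≤ ∑ k, Δ k * ∑ l, C.A k l * Δ l := h
      _ = ∑ k, Δ k * (C.m k t - C.m k s) :=
          Finset.sum_congr rfl fun k _ => by rw [hdm k]
  have hsum : (∑ k, Δ k * (C.m k t - C.m k s)) ≤ n * (e * (C.M * W) + 4 * ε * W) := by
    calc (∑ k, Δ k * (C.m k t - C.m k s))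
        ≤ ∑ _k : Fin n, (e * (C.M * W) + 4 * ε * W) :=
          Finset.sum_le_sum fun k _ => hterm k
      _ = n * (e * (C.M * W) + 4 * ε * W) := by
          rw [Finset.sum_const, Finset.card_univ, Fintype.card_fin, nsmul_eq_mul]
  -- conclude
  rcases eq_or_lt_of_le hW0 with hW | hWpos
  · have : |Δ j| ≤ W := hWk j
    rw [← hW] at this
    have : |Δ j| ≤ 0 := this
    calc |C.X t j - C.X s j| = |Δ j| := rfl
      _ ≤ 0 := this
      _ ≤ δ := hδ.le
  · have hlamW : C.lam * W ≤ n * (e * C.M + 4 * ε) := by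
      have h1 : C.lam * W * W ≤ n * (e * C.M + 4 * ε) * W := by
        calc C.lam * W * W = C.lam * W ^ 2 := by ring
          _ ≤ ∑ k, Δ k * (C.m k t - C.m k s) := hquad
          _ ≤ ↑n * (e * (C.M * W) + 4 * ε * W) := hsum
          _ = ↑n * (e * C.M + 4 * ε) * W := by ring
      exact le_of_mul_le_mul_right h1 hWpos
    have hVδ' : C.V s - C.V t < δ' := by
      have h1 := hnear s hsT₁
      have h2 := C.Vlim_le (le_trans hs0 hst)
      linarith
    have hnM : (0:ℝ) < n * C.M := mul_pos hn1 hM0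
    have hnne : (n:ℝ) ≠ 0 := hn1.ne'
    have hMne : C.M ≠ 0 := hM0.ne'
    have hlne : C.lam ≠ 0 := C.hlam0.ne'
    have he_lt : e < C.lam * δ / (2 * n * C.M) := by
      rw [hedef, div_lt_iff₀ (by positivity : (0:ℝ) < 2 * ε)]
      calc C.V s - C.V t < δ' := hVδ'
        _ = C.lam * δ / (2 * n * C.M) * (2 * ε) := by
            rw [hδ'def]
            field_simp
    have h5 : (n:ℝ) * C.M * e < C.lam * δ / 2 := by
      have h6 : (n:ℝ) * C.M * (C.lam * δ / (2 * n * C.M)) = C.lam * δ / 2 := by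
        field_simp
      calc (n:ℝ) * C.M * e < (n:ℝ) * C.M * (C.lam * δ / (2 * n * C.M)) :=
            (mul_lt_mul_iff_right₀ hnM).mpr he_lt
        _ = C.lam * δ / 2 := h6
    have hid : (n:ℝ) * (4 * ε) = C.lam * δ / 2 := by
      rw [hεdef]
      field_simp
      ring
    have hexp : (n:ℝ) * (e * C.M + 4 * ε) = (n:ℝ) * C.M * e + (n:ℝ) * (4 * ε) := by
      ring
    have hW_lt : C.lam * W < C.lam * δ := by
      rw [hexp, hid] at hlamW
      linarith
    have hWδ : W < δ := lt_of_mul_lt_mul_left hW_lt C.hlam0.le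
    exact le_trans (hWk j) hWδ.le

lemma X_tendsto : ∃ xstar : Fin n → ℝ, Tendsto C.X atTop (nhds xstar) := by
  have hcs : CauchySeq (fun k : ℕ => C.X k) := by
    rw [Metric.cauchySeq_iff']
    intro δ hδ
    obtain ⟨T, hT0, hest⟩ := C.cauchy_est (δ := δ/2) (by linarith)
    refine ⟨⌈T⌉₊, fun k hk => ?_⟩
    have h1 : T ≤ (⌈T⌉₊ : ℝ) := Nat.le_ceil T
    have h2 : ((⌈T⌉₊ : ℕ) : ℝ) ≤ (k : ℝ) := by exact_mod_cast hk
    have h3 := hest (⌈T⌉₊ : ℝ) k h1 h2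
    have h4 : dist (C.X k) (C.X (⌈T⌉₊ : ℝ)) ≤ δ/2 := by
      rw [dist_pi_le_iff (by linarith)]
      intro j
      rw [Real.dist_eq]
      exact h3 j
    calc dist (C.X (k:ℝ)) (C.X ((⌈T⌉₊ : ℕ):ℝ)) ≤ δ/2 := h4
      _ < δ := by linarith
  obtain ⟨xstar, hxs⟩ := cauchySeq_tendsto_of_complete hcs
  refine ⟨xstar, ?_⟩
  rw [Metric.tendsto_atTop]
  intro δ hδ
  obtain ⟨T, hT0, hest⟩ := C.cauchy_est (δ := δ/3) (by linarith)
  obtain ⟨K, hK⟩ := (Metric.tendsto_atTop.mp hxs) (δ/3) (by linarith)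
  refine ⟨T, fun t ht => ?_⟩
  set k := max K ⌈t⌉₊ with hkdef
  have ht0 : 0 ≤ t := le_trans hT0 ht
  have htk : t ≤ ((k:ℕ):ℝ) := by
    have h1 : t ≤ (⌈t⌉₊ : ℝ) := Nat.le_ceil t
    have h2 : ((⌈t⌉₊ : ℕ) : ℝ) ≤ ((k:ℕ) : ℝ) := by
      exact_mod_cast le_max_right K ⌈t⌉₊
    linarith
  have hdist1 : dist (C.X t) (C.X (k:ℝ)) ≤ δ/3 := by
    rw [dist_pi_le_iff (by linarith)]
    intro j
    rw [Real.dist_eq, abs_sub_comm]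
    exact hest t (k:ℝ) ht htk j
  have hdist2 : dist (C.X ((k:ℕ):ℝ)) xstar < δ/3 := hK k (le_max_left _ _)
  calc dist (C.X t) xstar ≤ dist (C.X t) (C.X ((k:ℕ):ℝ)) + dist (C.X ((k:ℕ):ℝ)) xstar :=
        dist_triangle _ _ _
    _ < δ := by linarith

end CtxP

lemma exists_lam {n : ℕ} (A : Matrix (Fin n) (Fin n) ℝ) (hA : A.PosDef) (hn : 0 < n) :
    ∃ lam : ℝ, 0 < lam ∧ lam ≤ 1 ∧
      ∀ v : Fin n → ℝ, lam * ‖v‖ ^ 2 ≤ ∑ i, v i * ∑ j, A i j * v j := by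
  haveI : Nonempty (Fin n) := ⟨⟨0, hn⟩⟩
  set Q : (Fin n → ℝ) → ℝ := fun v => ∑ i, v i * ∑ j, A i j * v j with hQdef
  have hQc : Continuous Q := by
    apply continuous_finset_sum
    intro i _
    exact (continuous_apply i).mul
      (continuous_finset_sum _ fun j _ => continuous_const.mul (continuous_apply j))
  have hQpos : ∀ v : Fin n → ℝ, v ≠ 0 → 0 < Q v := by
    intro v hv
    have h := hA.dotProduct_mulVec_pos hv
    have hstar : star v = v := by
      funext i; simp
    rw [hstar] at h
    have heq : dotProduct v (A *ᵥ v) = Q v := by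
      simp [dotProduct, Matrix.mulVec, hQdef]
    rwa [heq] at h
  have hscale : ∀ (r : ℝ) (v : Fin n → ℝ), Q (r • v) = r ^ 2 * Q v := by
    intro r v
    rw [hQdef]
    simp only [Pi.smul_apply, smul_eq_mul]
    rw [Finset.mul_sum]
    apply Finset.sum_congr rfl
    intro i _
    have hin : ∑ j, A i j * (r * v j) = r * ∑ j, A i j * v j := by
      rw [Finset.mul_sum]
      exact Finset.sum_congr rfl fun j _ => by ring
    rw [hin]; ring
  have hsne : (Metric.sphere (0 : Fin n → ℝ) 1).Nonempty :=
    NormedSpace.sphere_nonempty.mpr (by norm_num)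
  obtain ⟨v₀, hv₀S, hmin⟩ := (isCompact_sphere (0 : Fin n → ℝ) 1).exists_isMinOn
    hsne hQc.continuousOn
  have hv₀n : ‖v₀‖ = 1 := by simpa using hv₀S
  have hv₀0 : v₀ ≠ 0 := by
    intro hc
    rw [hc, norm_zero] at hv₀n
    norm_num at hv₀n
  set c := Q v₀ with hcdef
  have hc0 : 0 < c := hQpos v₀ hv₀0
  refine ⟨min c 1, lt_min hc0 one_pos, min_le_right _ _, ?_⟩
  intro v
  rcases eq_or_ne v 0 with hv | hv
  · subst hv
    simp [hQdef]
  · have hvn : ‖v‖ ≠ 0 := norm_ne_zero_iff.mpr hv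
    have hvpos : 0 < ‖v‖ := norm_pos_iff.mpr hv
    set u := ‖v‖⁻¹ • v with hudef
    have hun : ‖u‖ = 1 := by
      rw [hudef, norm_smul, norm_inv, norm_norm, inv_mul_cancel₀ hvn]
    have huS : u ∈ Metric.sphere (0 : Fin n → ℝ) 1 := by
      simp [hun]
    have hQu : c ≤ Q u := hmin huS
    have hQuv : Q u = (‖v‖⁻¹) ^ 2 * Q v := hscale _ _
    have hQv : Q v = ‖v‖ ^ 2 * Q u := by
      rw [hQuv]
      field_simp
    calc min c 1 * ‖v‖ ^ 2 ≤ c * ‖v‖ ^ 2 :=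
          mul_le_mul_of_nonneg_right (min_le_left _ _) (sq_nonneg _)
      _ ≤ Q u * ‖v‖ ^ 2 := mul_le_mul_of_nonneg_right hQu (sq_nonneg _)
      _ = Q v := by rw [hQv]; ring

lemma indicator_ii {f : ℝ → ℝ}
    (h : ∀ a b : ℝ, 0 ≤ a → 0 ≤ b → IntervalIntegrable f volume a b) :
    ∀ a b : ℝ, IntervalIntegrable (fun τ => if 0 ≤ τ then f τ else 0) volume a b := by
  have key : ∀ a b : ℝ, a ≤ b →
      IntervalIntegrable (fun τ => if 0 ≤ τ then f τ else 0) volume a b := by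
    intro a b hab
    rw [intervalIntegrable_iff, uIoc_of_le hab]
    have hsplit : Ioc a b = (Ioc a b ∩ Iio 0) ∪ (Ioc a b ∩ Ici 0) := by
      ext τ
      simp only [mem_union, mem_inter_iff, mem_Iio, mem_Ici, mem_Ioc]
      constructor
      · intro hτ
        rcases lt_or_ge τ 0 with hc | hc
        · exact Or.inl ⟨hτ, hc⟩
        · exact Or.inr ⟨hτ, hc⟩
      · rintro (⟨hτ, _⟩ | ⟨hτ, _⟩) <;> exact hτ
    rw [hsplit]
    apply IntegrableOn.union
    · have hmeas : MeasurableSet (Ioc a b ∩ Iio 0) :=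
        measurableSet_Ioc.inter measurableSet_Iio
      have h0 : IntegrableOn (fun _ : ℝ => (0:ℝ)) (Ioc a b ∩ Iio 0) volume :=
        integrableOn_zero
      exact (integrableOn_congr_fun
        (fun τ hτ => if_neg (not_le.mpr hτ.2)) hmeas).mpr h0
    · have hmeas : MeasurableSet (Ioc a b ∩ Ici 0) :=
        measurableSet_Ioc.inter measurableSet_Ici
      rcases le_or_gt 0 b with hb | hb
      · have hsub : Ioc a b ∩ Ici 0 ⊆ Icc 0 b := fun τ hτ => ⟨hτ.2, hτ.1.2⟩
        have hI : IntegrableOn f (Icc 0 b) volume := by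
          have h1 := (h 0 b (le_refl 0) hb).1
          rwa [integrableOn_Icc_iff_integrableOn_Ioc]
        have hmono := hI.mono_set hsub
        exact (integrableOn_congr_fun (fun τ hτ => if_pos hτ.2) hmeas).mpr hmono
      · have hempty : Ioc a b ∩ Ici 0 = ∅ := by
          ext τ
          simp only [mem_inter_iff, mem_Ioc, mem_Ici, mem_empty_iff_false, iff_false]
          rintro ⟨⟨_, h2⟩, h3⟩
          linarith
        rw [hempty]
        exact integrableOn_empty
  intro a b
  rcases le_total a b with hab | hab
  · exact key a b hab
  · exact (key b a hab).symm

def ACWithDeriv {E : Type*} [NormedAddCommGroup E] [NormedSpace ℝ E]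
    (f f' : ℝ → E) : Prop :=
  (∀ a b, 0 ≤ a → 0 ≤ b → IntervalIntegrable f' volume a b) ∧
  ∀ t, 0 ≤ t → f t = f 0 + ∫ s in (0:ℝ)..t, f' s

/-- for `A` symmetric positive definite and `x` an arbitrary absolutely
continuous trajectory with `ẋᵢ(t)·(Ax(t))ᵢ ≤ 0` for all `i` and a.e. `t`,
`x(t)` converges to a constant vector as `t → ∞`. -/
theorem converges_posdef (n : ℕ) (A : Matrix (Fin n) (Fin n) ℝ)
    (hA : A.PosDef)
    (x x' : ℝ → Fin n → ℝ) (hx : ACWithDeriv x x')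
    (hcond : ∀ᵐ t ∂volume, t ∈ Ici (0:ℝ) → ∀ i, x' t i * A.mulVec (x t) i ≤ 0) :
    ∃ xstar : Fin n → ℝ, Tendsto x atTop (nhds xstar) := by
  rcases Nat.eq_zero_or_pos n with hn0 | hn
  · subst hn0
    refine ⟨fun i => i.elim0, ?_⟩
    have hx0 : x = fun _ => (fun i : Fin 0 => i.elim0) :=
      funext fun t => funext fun i => i.elim0
    rw [hx0]
    exact tendsto_const_nhds
  · -- component integrability of x'
    have hcomp : ∀ i : Fin n, ∀ a b : ℝ, 0 ≤ a → 0 ≤ b →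
        IntervalIntegrable (fun τ => x' τ i) volume a b := by
      intro i a b ha hb
      have h := hx.1 a b ha hb
      exact ⟨(ContinuousLinearMap.proj (R := ℝ) (φ := fun _ : Fin n => ℝ) i).integrable_comp h.1,
        (ContinuousLinearMap.proj (R := ℝ) (φ := fun _ : Fin n => ℝ) i).integrable_comp h.2⟩
    set g : ℝ → Fin n → ℝ := fun τ i => if 0 ≤ τ then x' τ i else 0 with hgdef
    have hgi : ∀ i : Fin n, ∀ a b : ℝ, IntervalIntegrable (fun τ => g τ i) volume a b :=
      fun i => indicator_ii (hcomp i)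
    set X : ℝ → Fin n → ℝ := fun t i => x 0 i + ∫ τ in (0:ℝ)..t, g τ i with hXdef
    have hrep : ∀ i : Fin n, ∀ a b : ℝ, X b i = X a i + ∫ τ in a..b, g τ i := by
      intro i a b
      have hadd := intervalIntegral.integral_add_adjacent_intervals
        (hgi i 0 a) (hgi i a b)
      show x 0 i + ∫ τ in (0:ℝ)..b, g τ i
        = (x 0 i + ∫ τ in (0:ℝ)..a, g τ i) + ∫ τ in a..b, g τ i
      rw [← hadd]; ring
    have hxX : ∀ t, 0 ≤ t → x t = X t := by
      intro t ht
      funext i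
      have h1 := hx.2 t ht
      have h2 : x t i = x 0 i + (∫ s in (0:ℝ)..t, x' s) i := by
        rw [h1]; rfl
      have h3 : (∫ s in (0:ℝ)..t, x' s i) = (∫ s in (0:ℝ)..t, x' s) i :=
        (ContinuousLinearMap.proj (R := ℝ) (φ := fun _ : Fin n => ℝ) i).intervalIntegral_comp_comm
          (hx.1 0 t (le_refl 0) ht)
      have h4 : (∫ s in (0:ℝ)..t, x' s i) = ∫ s in (0:ℝ)..t, g s i := by
        apply intervalIntegral.integral_congr
        intro τ hτ
        rw [uIcc_of_le ht] at hτ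
        exact (if_pos hτ.1).symm
      show x t i = x 0 i + ∫ τ in (0:ℝ)..t, g τ i
      rw [h2, ← h3, h4]
    have hAsymm : ∀ i j, A i j = A j i := by
      intro i j
      conv_lhs => rw [← hA.1]
      simp [Matrix.conjTranspose_apply]
    obtain ⟨lam, hlam0, hlam1, hlamQ⟩ := exists_lam A hA hn
    set Mv : ℝ := 1 + ∑ i, ∑ j, |A i j| with hMdef
    have hM1 : 1 ≤ Mv := le_add_of_nonneg_right (by positivity)
    have hMA : ∀ i, (∑ j, |A i j|) ≤ Mv := by
      intro i
      have h := Finset.single_le_sum (f := fun i => ∑ j, |A i j|)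
        (fun i _ => by positivity) (Finset.mem_univ i)
      rw [hMdef]
      linarith
    have hsign : ∀ᵐ τ ∂(volume : Measure ℝ), 0 ≤ τ →
        ∀ i, g τ i * (∑ j, A i j * X τ j) ≤ 0 := by
      filter_upwards [hcond] with τ hτ
      intro hτ0 i
      have h1 := hτ (mem_Ici.mpr hτ0) i
      have h2 : g τ i = x' τ i := if_pos hτ0
      have h3 : (∑ j, A i j * X τ j) = A.mulVec (x τ) i := by
        rw [← hxX τ hτ0]
        simp [Matrix.mulVec, dotProduct]
      rw [h2, h3]
      exact h1
    set C : CtxP n :=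
      ⟨A, X, g, hn, hAsymm, hgi, hrep, hsign, lam, hlam0, hlam1, hlamQ, Mv, hM1, hMA⟩
      with hCdef
    obtain ⟨xstar, hXt⟩ := C.X_tendsto
    refine ⟨xstar, ?_⟩
    have hEq : C.X =ᶠ[atTop] x :=
      (eventually_ge_atTop (0:ℝ)).mono fun t ht => (hxX t ht).symm
    exact Filter.Tendsto.congr' hEq hXt
end

section
/- Let A be symmetric positive semi-definite with the property that every nonzero kernel vector has all components nonzero. If (v_m) is a sequence in ℝ^n with 2ε ≤ ‖v_m‖ ≤ 4ε for some ε > 0, and the n-th component (v_m)_n → 0, then liminf_{m→∞} dist(v_m, ker A) > 0. -/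
/-!
On the compact annulus `2ε ≤ ‖x‖ ≤ 4ε` the continuous function `x ↦ dist(x, ker A) + |xₙ|`
never vanishes: a point of the annulus lying in the kernel is a nonzero kernel vector, so its
last coordinate is nonzero. Hence this function is bounded below there by some `c > 0`, and
since `(vₘ)ₙ → 0`, eventually `dist(vₘ, ker A) ≥ c / 2`.
-/

open Matrix Filter Topology Metric

theorem IsCompact.exists_pos_le_infDist_add_abs {X : Type*} [MetricSpace X] {S K : Set X}
    (hS : IsCompact S) (hK : IsClosed K) (hKne : K.Nonempty) {g : X → ℝ} (hg : Continuous g)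
    (hSK : ∀ x ∈ S, x ∈ K → g x ≠ 0) :
    ∃ c, 0 < c ∧ ∀ x ∈ S, c ≤ infDist x K + |g x| := by
  refine hS.exists_forall_le' ((continuous_infDist_pt K).add hg.abs).continuousOn fun x hx => ?_
  by_cases hxK : x ∈ K
  · exact add_pos_of_nonneg_of_pos infDist_nonneg (abs_pos.mpr (hSK x hx hxK))
  · exact add_pos_of_pos_of_nonneg ((hK.notMem_iff_infDist_pos hKne).mp hxK) (abs_nonneg _)

theorem Filter.liminf_pos_of_eventually_le_add_abs {ι : Type*} {l : Filter ι} [l.NeBot]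
    {u w : ι → ℝ} {c : ℝ} (hc : 0 < c) (hw : Tendsto w l (𝓝 0))
    (hbdd : IsBoundedUnder (· ≤ ·) l u) (hu : ∀ᶠ i in l, c ≤ u i + |w i|) :
    0 < liminf u l := by
  have hw_small : ∀ᶠ i in l, |w i| < c / 2 := by
    simpa [Real.dist_eq] using hw.eventually (ball_mem_nhds (0 : ℝ) (half_pos hc))
  have hu_half : ∀ᶠ i in l, c / 2 ≤ u i := by
    filter_upwards [hu, hw_small] with i hi hwi
    linarith
  exact (half_pos hc).trans_le (le_liminf_of_le hbdd.isCoboundedUnder_ge hu_half)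

theorem liminf_dist_kernel_pos_general (n : ℕ) (A : Matrix (Fin (n+1)) (Fin (n+1)) ℝ)
    (hker : ∀ w : Fin (n+1) → ℝ, A.mulVec w = 0 → w ≠ 0 → ∀ i, w i ≠ 0)
    (v : ℕ → Fin (n+1) → ℝ) (ε : ℝ) (hε : 0 < ε)
    (hlow : ∀ m, 2 * ε ≤ ‖v m‖) (hup : ∀ m, ‖v m‖ ≤ 4 * ε)
    (hlast : Tendsto (fun m => v m (Fin.last n)) atTop (nhds 0)) :
    0 < liminf (fun m => Metric.infDist (v m) {w : Fin (n+1) → ℝ | A.mulVec w = 0}) atTop := by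
  set K : Set (Fin (n+1) → ℝ) := {w | A.mulVec w = 0}
  have hK0 : (0 : Fin (n+1) → ℝ) ∈ K := A.mulVec_zero
  have hK : IsClosed K :=
    isClosed_eq (continuous_const.matrix_mulVec continuous_id) continuous_const
  set S : Set (Fin (n+1) → ℝ) := {x | 2 * ε ≤ ‖x‖ ∧ ‖x‖ ≤ 4 * ε}
  have hS : IsCompact S := isCompact_of_isClosed_isBounded
    ((isClosed_le continuous_const continuous_norm).inter
      (isClosed_le continuous_norm continuous_const))
    ((isBounded_closedBall (x := 0) (r := 4 * ε)).subset fun x hx => by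
      simpa using hx.2)
  obtain ⟨c, hc, hcS⟩ :=
    hS.exists_pos_le_infDist_add_abs hK ⟨0, hK0⟩ (continuous_apply (Fin.last n))
      fun x hx hxK => hker x hxK (norm_pos_iff.mp (by linarith [hx.1])) _
  refine liminf_pos_of_eventually_le_add_abs hc hlast ?_
    (Eventually.of_forall fun m => hcS _ ⟨hlow m, hup m⟩)
  refine isBoundedUnder_of ⟨4 * ε, fun m => ?_⟩
  calc infDist (v m) K ≤ dist (v m) 0 := infDist_le_dist_of_mem hK0
    _ = ‖v m‖ := dist_zero_right _
    _ ≤ 4 * ε := hup m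

/-- if `A` is an `(n+1)×(n+1)` symmetric positive semi-definite matrix whose
nonzero kernel vectors have all components nonzero, and `(vₘ)` satisfies
`2ε ≤ ‖vₘ‖ ≤ 4ε` with `ε > 0` while the last component `(vₘ)ₙ → 0`, then
`liminf dist(vₘ, ker A) > 0`. -/
theorem liminf_dist_kernel_pos (n : ℕ) (A : Matrix (Fin (n+1)) (Fin (n+1)) ℝ)
    (hA : A.PosSemidef)
    (hker : ∀ w : Fin (n+1) → ℝ, A.mulVec w = 0 → w ≠ 0 → ∀ i, w i ≠ 0)
    (v : ℕ → Fin (n+1) → ℝ) (ε : ℝ) (hε : 0 < ε)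
    (hlow : ∀ m, 2 * ε ≤ ‖v m‖) (hup : ∀ m, ‖v m‖ ≤ 4 * ε)
    (hlast : Tendsto (fun m => v m (Fin.last n)) atTop (nhds 0)) :
    0 < liminf (fun m => Metric.infDist (v m) {w : Fin (n+1) → ℝ | A.mulVec w = 0}) atTop :=
  liminf_dist_kernel_pos_general n A hker v ε hε hlow hup hlast
end

section
/- Under the platoon control law ẋ_i = k·T_{d(i)w̄}(Σ_{j:(i,j)∈E}(x_j − x_i + w_{ji} − D_{ji})) with bounded disturbances |w_{ji}| ≤ w̄ and realizable distances D_{ji} = p_j − p_i, the limit x* of the trajectory satisfies |Σ_{j:(i,j)∈E}(x*_j − x*_i − D_{ji})| ≤ 2 d(i) w̄ for every agent i. -/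
/-!
Fix an agent `i` and write its control input as `u = g + e`, where `g(t) = Σⱼ (xⱼ − xᵢ − D_{ji})`
converges to the error `S* = Σⱼ (x*ⱼ − x*ᵢ − D_{ji})` and the disturbance term `e` satisfies
`|e| ≤ d(i) w̄`. If `S* > 2 d(i) w̄`, then eventually `u ≥ d(i) w̄ + ε`, so the dead-zone
threshold keeps `ẋᵢ ≥ k T(d(i) w̄ + ε) > 0` and `xᵢ` escapes to `+∞`, contradicting
convergence; `S* < −2 d(i) w̄` is the mirror image.
-/

open MeasureTheory Set Filter

open Topology

theorem ACWithDeriv.comp_clm {E F : Type*} [NormedAddCommGroup E] [NormedSpace ℝ E]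
    [CompleteSpace E] [NormedAddCommGroup F] [NormedSpace ℝ F] [CompleteSpace F]
    {f f' : ℝ → E} (hf : ACWithDeriv f f') (L : E →L[ℝ] F) :
    ACWithDeriv (fun t => L (f t)) (fun t => L (f' t)) := by
  refine ⟨fun a b ha hb => ?_, fun t ht => ?_⟩
  · have h := hf.1 a b ha hb
    exact ⟨L.integrable_comp h.1, L.integrable_comp h.2⟩
  · dsimp only
    rw [hf.2 t ht, map_add, L.intervalIntegral_comp_comm (hf.1 0 t le_rfl ht)]

theorem ACWithDeriv.neg {E : Type*} [NormedAddCommGroup E] [NormedSpace ℝ E] [CompleteSpace E]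
    {f f' : ℝ → E} (hf : ACWithDeriv f f') : ACWithDeriv (fun t => -f t) (fun t => -f' t) := by
  simpa using hf.comp_clm (-ContinuousLinearMap.id ℝ E)

theorem ACWithDeriv.tendsto_atTop_of_ae_le_deriv {f f' : ℝ → ℝ} (hf : ACWithDeriv f f')
    {T₀ c : ℝ} (hc : 0 < c) (hderiv : ∀ᵐ t, t ∈ Ici T₀ → c ≤ f' t) :
    Tendsto f atTop atTop := by
  set T₁ := max T₀ 0
  have hT₁ : 0 ≤ T₁ := le_max_right _ _
  have hlinear : ∀ t, T₁ ≤ t → f T₁ + c * (t - T₁) ≤ f t := by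
    intro t ht
    have ht₀ : 0 ≤ t := hT₁.trans ht
    have hincr : f t - f T₁ = ∫ s in T₁..t, f' s := by
      rw [hf.2 t ht₀, hf.2 T₁ hT₁, ← intervalIntegral.integral_interval_sub_left
        (hf.1 0 t le_rfl ht₀) (hf.1 0 T₁ le_rfl hT₁)]
      ring
    have hmono : ∫ _ in T₁..t, c ≤ ∫ s in T₁..t, f' s := by
      refine intervalIntegral.integral_mono_ae_restrict ht intervalIntegrable_const
        (hf.1 T₁ t hT₁ ht₀) ?_
      filter_upwards [ae_restrict_of_ae hderiv, ae_restrict_mem measurableSet_Icc]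
        with s hs hmem
      exact hs ((le_max_left _ _).trans hmem.1)
    rw [intervalIntegral.integral_const, smul_eq_mul] at hmono
    linarith
  refine tendsto_atTop_mono' _ ((eventually_ge_atTop T₁).mono hlinear) ?_
  exact tendsto_atTop_add_const_left _ _
    ((tendsto_atTop_add_const_right _ _ tendsto_id).const_mul_atTop hc)

theorem Monotone.pos_of_gt_of_zero_iff {φ : ℝ → ℝ} {θ s : ℝ} (hφ : Monotone φ) (hθ : 0 ≤ θ)
    (hzero : ∀ s, φ s = 0 ↔ |s| ≤ θ) (hs : θ < s) : 0 < φ s := by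
  have hθzero : φ θ = 0 := (hzero θ).mpr (abs_of_nonneg hθ).le
  exact (hθzero ▸ hφ hs.le).lt_of_ne' fun h =>
    ((hzero s).mp h).not_gt (hs.trans_le (le_abs_self s))

theorem Monotone.neg_of_lt_neg_of_zero_iff {φ : ℝ → ℝ} {θ s : ℝ} (hφ : Monotone φ)
    (hθ : 0 ≤ θ) (hzero : ∀ s, φ s = 0 ↔ |s| ≤ θ) (hs : s < -θ) : φ s < 0 := by
  have hθzero : φ (-θ) = 0 := (hzero (-θ)).mpr ((abs_neg θ).trans (abs_of_nonneg hθ)).le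
  exact (hθzero ▸ hφ hs.le).lt_of_ne fun h =>
    ((hzero s).mp h).not_gt ((lt_neg_of_lt_neg hs).trans_le (neg_le_abs s))

theorem ACWithDeriv.le_add_of_deriv_eq_comp {f f' ψ u g : ℝ → ℝ} {θ η L a : ℝ}
    (hf : ACWithDeriv f f') (hfL : Tendsto f atTop (𝓝 L)) (hψ : Monotone ψ)
    (hψpos : ∀ s, θ < s → 0 < ψ s) (hderiv : ∀ᵐ t, t ∈ Ici 0 → f' t = ψ (u t))
    (hug : ∀ᶠ t in atTop, g t - η ≤ u t) (hg : Tendsto g atTop (𝓝 a)) : a ≤ θ + η := by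
  by_contra! ha
  set ε := (a - θ - η) / 2
  have hε : 0 < ε := half_pos (by linarith)
  have hgε : ∀ᶠ t in atTop, θ + η + ε < g t :=
    hg.eventually (eventually_gt_nhds (by simp only [ε]; linarith))
  obtain ⟨T₀, hT₀⟩ := eventually_atTop.mp (hug.and hgε)
  have hderiv_ge : ∀ᵐ t, t ∈ Ici (max T₀ 0) → ψ (θ + ε) ≤ f' t := by
    filter_upwards [hderiv] with t ht htT
    obtain ⟨hu, hgt⟩ := hT₀ t ((le_max_left _ _).trans htT)
    rw [ht (show (0 : ℝ) ≤ t from (le_max_right _ _).trans htT)]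
    exact hψ (by linarith)
  exact not_tendsto_atTop_of_tendsto_nhds hfL
    (hf.tendsto_atTop_of_ae_le_deriv (hψpos _ (by linarith)) hderiv_ge)

theorem ACWithDeriv.abs_le_add_of_deriv_eq_comp {f f' ψ u g : ℝ → ℝ} {θ η L a : ℝ}
    (hf : ACWithDeriv f f') (hfL : Tendsto f atTop (𝓝 L)) (hψ : Monotone ψ)
    (hψpos : ∀ s, θ < s → 0 < ψ s) (hψneg : ∀ s, s < -θ → ψ s < 0)
    (hderiv : ∀ᵐ t, t ∈ Ici 0 → f' t = ψ (u t))
    (hug : ∀ᶠ t in atTop, |u t - g t| ≤ η) (hg : Tendsto g atTop (𝓝 a)) : |a| ≤ θ + η := by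
  refine abs_le.mpr ⟨?_, hf.le_add_of_deriv_eq_comp hfL hψ hψpos hderiv
    (hug.mono fun t ht => by linarith [(abs_le.mp ht).1]) hg⟩
  have hmirror := hf.neg.le_add_of_deriv_eq_comp (ψ := fun s => -ψ (-s)) (u := fun t => -u t)
    hfL.neg (fun s t hst => neg_le_neg (hψ (neg_le_neg hst)))
    (fun s hs => neg_pos.mpr (hψneg _ (by linarith)))
    (hderiv.mono fun t ht ht₀ => by simp [ht ht₀])
    (hug.mono fun t ht => by linarith [(abs_le.mp ht).2]) hg.neg
  linarith

theorem platoon_limit_error_bound_general (n : ℕ)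
    (G : SimpleGraph (Fin n)) [DecidableRel G.Adj]
    (wbar : ℝ) (hwbar : 0 < wbar) (k : ℝ) (hk : 0 < k)
    (p : Fin n → ℝ)
    (T : ℝ → ℝ → ℝ)
    (hTmono : ∀ w, Monotone (T w))
    (hTzero : ∀ w s, 0 < w → (T w s = 0 ↔ |s| ≤ w))
    (w : ℝ → Fin n → Fin n → ℝ)
    (hwbdd : ∀ t, 0 ≤ t → ∀ j i, |w t j i| ≤ wbar)
    (x x' : ℝ → Fin n → ℝ) (hx : ACWithDeriv x x')
    (hode : ∀ᵐ t ∂volume, t ∈ Ici (0:ℝ) → ∀ i,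
      x' t i = k * T ((G.degree i : ℝ) * wbar)
        (∑ j ∈ G.neighborFinset i, (x t j - x t i + w t j i - (p j - p i))))
    (xstar : Fin n → ℝ) (hlim : Tendsto x atTop (nhds xstar)) :
    ∀ i, |∑ j ∈ G.neighborFinset i, (xstar j - xstar i - (p j - p i))|
      ≤ 2 * (G.degree i : ℝ) * wbar := by
  intro i
  rcases Nat.eq_zero_or_pos (G.degree i) with hdeg | hdeg
  · simp [Finset.card_eq_zero.mp ((G.card_neighborFinset_eq_degree i).trans hdeg), hdeg]
  set θ := (G.degree i : ℝ) * wbar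
  have hθ : 0 < θ := by positivity
  have hcoord : ∀ j, Tendsto (fun t => x t j) atTop (𝓝 (xstar j)) := tendsto_pi_nhds.mp hlim
  have hnoise : ∀ᶠ t in atTop,
      |∑ j ∈ G.neighborFinset i, (x t j - x t i + w t j i - (p j - p i))
        - ∑ j ∈ G.neighborFinset i, (x t j - x t i - (p j - p i))| ≤ θ := by
    filter_upwards [eventually_ge_atTop 0] with t ht
    rw [← Finset.sum_sub_distrib]
    refine (Finset.abs_sum_le_sum_abs _ _).trans ?_
    refine (Finset.sum_le_card_nsmul _ _ wbar fun j _ => ?_).trans_eq ?_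
    · simpa using hwbdd t ht j i
    · rw [G.card_neighborFinset_eq_degree, nsmul_eq_mul]
  have hbound := (hx.comp_clm (ContinuousLinearMap.proj i)).abs_le_add_of_deriv_eq_comp
    (hcoord i) ((hTmono θ).const_mul hk.le)
    (fun s hs => mul_pos hk ((hTmono θ).pos_of_gt_of_zero_iff hθ.le (hTzero θ · hθ) hs))
    (fun s hs => mul_neg_of_pos_of_neg hk
      ((hTmono θ).neg_of_lt_neg_of_zero_iff hθ.le (hTzero θ · hθ) hs))
    (hode.mono fun t ht ht₀ => ht ht₀ i) hnoise
    (tendsto_finsetSum _ fun j _ => ((hcoord j).sub (hcoord i)).sub tendsto_const_nhds)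
  linarith

/-- under the platoon control law with bounded disturbances and realizable
distances, the limit `x*` of the trajectory satisfies
`|Σ_{j:(i,j)∈E}(x*ⱼ − x*ᵢ − D_{ji})| ≤ 2 d(i) w̄` for every agent `i`. -/
theorem platoon_limit_error_bound (n : ℕ)
    (G : SimpleGraph (Fin n)) [DecidableRel G.Adj] (hconn : G.Connected)
    (wbar : ℝ) (hwbar : 0 < wbar) (k : ℝ) (hk : 0 < k)
    (p : Fin n → ℝ)
    (T : ℝ → ℝ → ℝ)
    (hTmono : ∀ w, Monotone (T w))
    (hTzero : ∀ w s, 0 < w → (T w s = 0 ↔ |s| ≤ w))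
    (w : ℝ → Fin n → Fin n → ℝ)
    (hwmeas : ∀ j i, Measurable (fun t => w t j i))
    (hwbdd : ∀ t, 0 ≤ t → ∀ j i, |w t j i| ≤ wbar)
    (x x' : ℝ → Fin n → ℝ) (hx : ACWithDeriv x x')
    (hode : ∀ᵐ t ∂volume, t ∈ Ici (0:ℝ) → ∀ i,
      x' t i = k * T ((G.degree i : ℝ) * wbar)
        (∑ j ∈ G.neighborFinset i, (x t j - x t i + w t j i - (p j - p i))))
    (xstar : Fin n → ℝ) (hlim : Tendsto x atTop (nhds xstar)) :
    ∀ i, |∑ j ∈ G.neighborFinset i, (xstar j - xstar i - (p j - p i))|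
      ≤ 2 * (G.degree i : ℝ) * wbar :=
  platoon_limit_error_bound_general n G wbar hwbar k hk p T hTmono hTzero w hwbdd x x' hx hode xstar
    hlim
end

section
/- For the chain (line) graph on n nodes, if a vector x* satisfies |Σ_{j:(i,j)∈E}(x*_j − x*_i − D_{ji})| ≤ 2 d(i) w̄ for every node i (with realizable D), then for each ℓ ∈ {2,...,n}, |x*_ℓ − x*_{ℓ−1} − D_{ℓ(ℓ−1)}| ≤ min(4ℓ − 6, 4n − 4ℓ + 2)·w̄. -/
/-!
Write `e ℓ = x*_ℓ − x*_{ℓ−1} − (p_ℓ − p_{ℓ−1})` for the residual on the edge `(ℓ−1, ℓ)`. The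
hypothesis at an interior node `i` says exactly `|e (i+1) − e i| ≤ 4 w̄`, and the hypotheses at the
two end nodes say `|e 2| ≤ 2 w̄` and `|e n| ≤ 2 w̄`. Walking along the chain from either end, the
residual grows by at most `4 w̄` per edge, which gives `(4ℓ − 6) w̄` from the left and
`(4(n − ℓ) + 2) w̄` from the right.
-/

theorem dist_le_mul_of_dist_succ_le {α : Type*} [PseudoMetricSpace α] {f : ℕ → α} {m k : ℕ}
    {δ : ℝ} (hmk : m ≤ k) (hstep : ∀ i, m ≤ i → i < k → dist (f i) (f (i + 1)) ≤ δ) :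
    dist (f m) (f k) ≤ (k - m : ℕ) * δ := by
  simpa using dist_le_Ico_sum_of_dist_le hmk fun {i} hmi hik => hstep i hmi hik

theorem abs_le_add_mul_of_abs_succ_sub_le {f : ℕ → ℝ} {m k : ℕ} {δ : ℝ} (hmk : m ≤ k)
    (hstep : ∀ i, m ≤ i → i < k → |f (i + 1) - f i| ≤ δ) :
    |f m| ≤ |f k| + (k - m : ℕ) * δ ∧ |f k| ≤ |f m| + (k - m : ℕ) * δ := by
  have h : |f m - f k| ≤ (k - m : ℕ) * δ := by
    rw [← Real.dist_eq]
    refine dist_le_mul_of_dist_succ_le hmk fun i hmi hik => ?_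
    rw [Real.dist_eq, abs_sub_comm]
    exact hstep i hmi hik
  constructor
  · linarith [abs_sub_abs_le_abs_sub (f m) (f k)]
  · linarith [abs_sub_abs_le_abs_sub (f k) (f m), abs_sub_comm (f m) (f k)]

theorem chain_error_bounds_general (n : ℕ)
    (wbar : ℝ)
    (xstar p : ℕ → ℝ)
    (h1 : |xstar 2 - xstar 1 - (p 2 - p 1)| ≤ 2 * wbar)
    (hend : |xstar (n - 1) - xstar n - (p (n - 1) - p n)| ≤ 2 * wbar)
    (hmid : ∀ i, 2 ≤ i → i ≤ n - 1 →
      |(xstar (i - 1) - xstar i - (p (i - 1) - p i)) +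
       (xstar (i + 1) - xstar i - (p (i + 1) - p i))| ≤ 2 * 2 * wbar) :
    ∀ ℓ, 2 ≤ ℓ → ℓ ≤ n →
      |xstar ℓ - xstar (ℓ - 1) - (p ℓ - p (ℓ - 1))|
        ≤ (min (4 * ℓ - 6) (4 * n - 4 * ℓ + 2) : ℕ) * wbar := by
  intro ℓ hℓ hℓn
  set e : ℕ → ℝ := fun ℓ => xstar ℓ - xstar (ℓ - 1) - (p ℓ - p (ℓ - 1)) with he
  have hstep : ∀ i, 2 ≤ i → i < n → |e (i + 1) - e i| ≤ 4 * wbar := by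
    intro i hi hin
    have h := hmid i hi (by omega)
    simp only [he, Nat.add_sub_cancel]
    convert h using 2 <;> ring
  have hfirst : |e 2| ≤ 2 * wbar := h1
  have hlast : |e n| ≤ 2 * wbar := by
    rwa [← abs_neg, show -e n = xstar (n - 1) - xstar n - (p (n - 1) - p n) by simp only [he]; ring]
  have hleft := (abs_le_add_mul_of_abs_succ_sub_le hℓ fun i hi hiℓ => hstep i hi (by omega)).2
  have hright := (abs_le_add_mul_of_abs_succ_sub_le hℓn fun i hi hin => hstep i (by omega) hin).1
  rcases min_cases (4 * ℓ - 6) (4 * n - 4 * ℓ + 2) with ⟨hmin, -⟩ | ⟨hmin, -⟩ <;> rw [hmin]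
  · rw [Nat.cast_sub (by omega)] at hleft ⊢
    push_cast at hleft ⊢
    linarith
  · rw [show 4 * n - 4 * ℓ + 2 = 4 * (n - ℓ) + 2 by omega]
    push_cast [Nat.cast_sub hℓn] at hright ⊢
    linarith

/-- for the chain graph on nodes `1,…,n` (with degrees `d(1)=d(n)=1`,
`d(i)=2` otherwise, and realizable `D_{ji} = pⱼ − pᵢ`), if `x*` satisfies
`|Σ_{j:(i,j)∈E}(x*ⱼ − x*ᵢ − D_{ji})| ≤ 2 d(i) w̄` for every node `i`, then for every
`ℓ ∈ {2,…,n}`, `|x*_ℓ − x*_{ℓ−1} − D_{ℓ(ℓ−1)}| ≤ min(4ℓ − 6, 4n − 4ℓ + 2)·w̄`. -/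
theorem chain_error_bounds (n : ℕ) (hn : 2 ≤ n)
    (wbar : ℝ) (hwbar : 0 < wbar)
    (xstar p : ℕ → ℝ)
    (h1 : |xstar 2 - xstar 1 - (p 2 - p 1)| ≤ 2 * wbar)
    (hend : |xstar (n - 1) - xstar n - (p (n - 1) - p n)| ≤ 2 * wbar)
    (hmid : ∀ i, 2 ≤ i → i ≤ n - 1 →
      |(xstar (i - 1) - xstar i - (p (i - 1) - p i)) +
       (xstar (i + 1) - xstar i - (p (i + 1) - p i))| ≤ 2 * 2 * wbar) :
    ∀ ℓ, 2 ≤ ℓ → ℓ ≤ n →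
      |xstar ℓ - xstar (ℓ - 1) - (p ℓ - p (ℓ - 1))|
        ≤ (min (4 * ℓ - 6) (4 * n - 4 * ℓ + 2) : ℕ) * wbar :=
  chain_error_bounds_general n wbar xstar p h1 hend hmid
end
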